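/- Let K = {R_n ⊕ I : n ≥ 2} ∪ {R ⊕ I}, where R_n ⊕ I is the graph consisting of a path on n vertices together with infinitely many isolated vertices and R ⊕ I is the one-way infinite ray together with infinitely many isolated vertices. Then K is E_range-learnable but not Ex-learnable: some continuous-on-LD(K) map reduces isomorphism on LD(K) to E_range, but no learner Ex-learns K. -/

import Mathlib

/-- A structure on domain ℕ: a binary relation given as a map to `Bool`. -/
abbrev Struc := ℕ → ℕ → Bool

/-- The restrictions of `R` and `R'` to `{0,…,s} × {0,…,s}` agree. -/
def restrEq (R R' : Struc) (s : ℕ) : Prop :=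
  ∀ x ≤ s, ∀ y ≤ s, R x y = R' x y

/-- `R` and `R'` are isomorphic structures. -/
def Isom (R R' : Struc) : Prop :=
  ∃ e : ℕ ≃ ℕ, ∀ x y, R' (e x) (e y) = R x y

/-- `R↾s` embeds into `R'`: there is a map injective on `{0,…,s}` preserving the relation. -/
def EmbedsRestr (R : Struc) (s : ℕ) (R' : Struc) : Prop :=
  ∃ h : ℕ → ℕ, (∀ x ≤ s, ∀ y ≤ s, h x = h y → x = y) ∧
    (∀ x ≤ s, ∀ y ≤ s, R' (h x) (h y) = R x y)

/-- The learning domain of a family: all isomorphic copies of members of the family. -/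
def LD {I : Type} (A : I → Struc) : Set Struc := {R | ∃ i, Isom R (A i)}

/-- A learner: its conjecture at stage `s` depends only on `R↾s`. -/
def IsLearner {I : Type} (M : Struc → ℕ → Option I) : Prop :=
  ∀ R R' s, restrEq R R' s → M R s = M R' s

/-- `M` Ex-learns the family `A`. -/
def ExLearns {I : Type} (A : I → Struc) (M : Struc → ℕ → Option I) : Prop :=
  ∀ R i, Isom R (A i) → ∃ s₀, ∀ s ≥ s₀, M R s = some i

/-- `M` Fin-learns the family `A`. -/
def FinLearns {I : Type} (A : I → Struc) (M : Struc → ℕ → Option I) : Prop :=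
  ∀ R i, Isom R (A i) →
    ∃ s₀, (∀ s < s₀, M R s = none) ∧ (∀ s ≥ s₀, M R s = some i)

/-- `M` co-learns the family `A`. -/
def CoLearns {I : Type} (A : I → Struc) (M : Struc → ℕ → Option I) : Prop :=
  ∀ R i, Isom R (A i) → ∀ j, (∃ s, M R s = some j) ↔ j ≠ i

/-- `M` nUs-learns the family `A`: it Ex-learns it and never abandons the correct conjecture. -/
def NUsLearns {I : Type} (A : I → Struc) (M : Struc → ℕ → Option I) : Prop :=
  ExLearns A M ∧
    ∀ R i, Isom R (A i) → ∀ s, M R s = some i → ∀ t ≥ s, M R t = some i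

/-- `M` Dec-learns the family `A`: it Ex-learns it and never repeats an abandoned conjecture. -/
def DecLearns {I : Type} (A : I → Struc) (M : Struc → ℕ → Option I) : Prop :=
  ExLearns A M ∧
    ∀ R ∈ LD A, ∀ (j : I) (s : ℕ), M R s = some j → M R (s + 1) ≠ some j →
      ∀ t > s, M R t ≠ some j

/-- `M` PL-learns the family `A`: the unique conjecture output infinitely often is correct. -/
def PLLearns {I : Type} (A : I → Struc) (M : Struc → ℕ → Option I) : Prop :=
  ∀ R ∈ LD A, ∀ i, {s | M R s = some i}.Infinite ↔ Isom R (A i)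

/-- The relation `E₀` on Baire space: eventual agreement. -/
def E0 (p q : ℕ → ℕ) : Prop := ∃ m, ∀ n ≥ m, p n = q n

/-- The relation `E₃` on `ℕ → (ℕ → ℕ)`: columnwise `E₀`. -/
def E3 (p q : ℕ → ℕ → ℕ) : Prop := ∀ m, E0 (p m) (q m)

/-- The relation `E_range` on Baire space: equality of ranges. -/
def Erange (p q : ℕ → ℕ) : Prop := Set.range p = Set.range q

/-- The one-way infinite ray (on the even numbers) together with infinitely many
isolated vertices (the odd numbers): `R ⊕ I`. -/
def rayGraph : Struc := fun x y =>
  decide (x % 2 = 0 ∧ y % 2 = 0 ∧ (x + 2 = y ∨ y + 2 = x))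

/-- The path on vertices `{0,…,n−1}` together with infinitely many isolated vertices:
`R_n ⊕ I`. -/
def pathGraph (n : ℕ) : Struc := fun x y =>
  decide ((x + 1 = y ∨ y + 1 = x) ∧ x < n ∧ y < n)

/-- The family `{R_n ⊕ I : n ≥ 2} ∪ {R ⊕ I}`: index `0` is the ray, index `k+1` is the
path on `k+2` vertices. -/
def pathFamily : ℕ → Struc
  | 0 => rayGraph
  | k + 1 => pathGraph (k + 2)

/-!
The number of non-isolated vertices is an isomorphism invariant taking the pairwise distinct
values `k + 2` on `R_{k+2} ⊕ I` and `∞` on `R ⊕ I`. Enumerating the initial segment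
`{m | m ≤ #(non-isolated vertices of R↾s)}` over all `s` only needs finite restrictions, so it is
continuous, and its range `{m | m ≤ #(non-isolated vertices of R)}` records the invariant.

A learner `M` that Ex-learns the family is defeated by a copy of the ray built vertex by vertex:
vertex `n + 1` is placed beyond a stage at which `M` conjectures the path on the first `n + 1`
vertices. Up to that stage the ray and that path have the same restriction, so on the ray `M`
conjectures a path at arbitrarily late stages and never settles on the ray.
-/

open Set

theorem Isom.symm {R R' : Struc} (h : Isom R R') : Isom R' R := by
  obtain ⟨e, he⟩ := h
  exact ⟨e.symm, fun x y => by rw [← he, e.apply_symm_apply, e.apply_symm_apply]⟩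

theorem Isom.trans {R R' R'' : Struc} (h : Isom R R') (h' : Isom R' R'') : Isom R R'' := by
  obtain ⟨e, he⟩ := h
  obtain ⟨e', he'⟩ := h'
  exact ⟨e.trans e', fun x y => by rw [Equiv.trans_apply, Equiv.trans_apply, he', he]⟩

def nonIsolated (R : Struc) : Set ℕ := {x | ∃ y, R x y = true}

theorem encard_nonIsolated_le_of_isom {R R' : Struc} (h : Isom R R') :
    (nonIsolated R).encard ≤ (nonIsolated R').encard := by
  obtain ⟨e, he⟩ := h
  rw [← e.injective.encard_image]
  refine encard_le_encard ?_
  rintro _ ⟨x, ⟨y, hxy⟩, rfl⟩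
  exact ⟨e y, (he x y).trans hxy⟩

theorem encard_nonIsolated_eq_of_isom {R R' : Struc} (h : Isom R R') :
    (nonIsolated R).encard = (nonIsolated R').encard :=
  le_antisymm (encard_nonIsolated_le_of_isom h) (encard_nonIsolated_le_of_isom h.symm)

theorem isom_iff_encard_nonIsolated_eq {I : Type} {A : I → Struc}
    (hA : Function.Injective fun i => (nonIsolated (A i)).encard) {R R' : Struc}
    (hR : R ∈ LD A) (hR' : R' ∈ LD A) :
    Isom R R' ↔ (nonIsolated R).encard = (nonIsolated R').encard := by
  obtain ⟨i, hi⟩ := hR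
  obtain ⟨j, hj⟩ := hR'
  refine ⟨encard_nonIsolated_eq_of_isom, fun h => ?_⟩
  rw [encard_nonIsolated_eq_of_isom hi, encard_nonIsolated_eq_of_isom hj] at h
  obtain rfl : i = j := hA h
  exact hi.trans hj.symm

theorem nonIsolated_pathGraph {n : ℕ} (hn : 2 ≤ n) : nonIsolated (pathGraph n) = Iio n := by
  ext x
  simp only [nonIsolated, pathGraph, mem_ofPred_eq, mem_Iio, decide_eq_true_eq]
  refine ⟨fun ⟨_, _, hx, _⟩ => hx, fun hx => ?_⟩
  by_cases h : x + 1 < n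
  · exact ⟨x + 1, by omega⟩
  · exact ⟨x - 1, by omega⟩

theorem nonIsolated_rayGraph_infinite : (nonIsolated rayGraph).Infinite :=
  infinite_of_injective_forall_mem (f := fun i => 2 * i) (fun a b (h : 2 * a = 2 * b) => by omega)
    fun i => ⟨2 * i + 2, by simp [rayGraph]⟩

theorem injective_encard_nonIsolated_pathFamily :
    Function.Injective fun i => (nonIsolated (pathFamily i)).encard := by
  have hpath (k : ℕ) : (nonIsolated (pathFamily (k + 1))).encard = (k + 2 : ℕ) := by
    rw [pathFamily, nonIsolated_pathGraph (by omega), ← Finset.coe_range,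
      encard_coe_eq_coe_finsetCard, Finset.card_range]
  have hray : (nonIsolated (pathFamily 0)).encard = ⊤ := nonIsolated_rayGraph_infinite.encard_eq
  rintro (_ | k) (_ | l) h <;> simp only [hpath, hray] at h
  · rfl
  · exact absurd h.symm (ENat.natCast_ne_top _)
  · exact absurd h (ENat.natCast_ne_top _)
  · have : k + 2 = l + 2 := by exact_mod_cast h
    omega

def nonIsolatedUpTo (R : Struc) (s : ℕ) : Finset ℕ :=
  (Finset.range (s + 1)).filter fun x => ∃ y ≤ s, R x y = true

theorem nonIsolatedUpTo_congr {R R' : Struc} {s : ℕ} (h : restrEq R R' s) :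
    nonIsolatedUpTo R s = nonIsolatedUpTo R' s := by
  refine Finset.filter_congr fun x hx => exists_congr fun y => and_congr_right fun hy => ?_
  rw [h x (Nat.lt_succ_iff.1 (Finset.mem_range.1 hx)) y hy]

theorem exists_le_card_nonIsolatedUpTo_iff (R : Struc) (m : ℕ) :
    (∃ s, m ≤ (nonIsolatedUpTo R s).card) ↔ (m : ℕ∞) ≤ (nonIsolated R).encard := by
  constructor
  · rintro ⟨s, hs⟩
    calc (m : ℕ∞) ≤ (nonIsolatedUpTo R s).card := by exact_mod_cast hs
      _ = (nonIsolatedUpTo R s : Set ℕ).encard := (encard_coe_eq_coe_finsetCard _).symm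
      _ ≤ _ := encard_le_encard fun x hx => by
          obtain ⟨-, y, -, hxy⟩ := Finset.mem_filter.1 (Finset.mem_coe.1 hx)
          exact ⟨y, hxy⟩
  · intro hm
    obtain ⟨t, hts, htm⟩ := exists_subset_encard_eq hm
    obtain ⟨t, rfl⟩ := (finite_of_encard_eq_coe htm).exists_finset_coe
    rw [encard_coe_eq_coe_finsetCard, Nat.cast_inj] at htm
    have hwit : ∀ x ∈ t, ∃ y, R x y = true := fun x hx => hts hx
    choose! y hy using hwit
    obtain ⟨s, hs⟩ := (t ∪ t.image y).exists_le
    refine ⟨s, htm ▸ Finset.card_le_card fun x hx => ?_⟩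
    have hxs := hs x (Finset.mem_union_left _ hx)
    have hys := hs (y x) (Finset.mem_union_right _ (Finset.mem_image_of_mem y hx))
    simp only [nonIsolatedUpTo, Finset.mem_filter, Finset.mem_range]
    exact ⟨by omega, y x, hys, hy x hx⟩

def nonIsolatedCountEnum (R : Struc) (k : ℕ) : ℕ :=
  min k.unpair.2 (nonIsolatedUpTo R k.unpair.1).card

theorem range_nonIsolatedCountEnum (R : Struc) :
    range (nonIsolatedCountEnum R) = {m : ℕ | (m : ℕ∞) ≤ (nonIsolated R).encard} := by
  ext m
  rw [mem_ofPred_eq, ← exists_le_card_nonIsolatedUpTo_iff]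
  constructor
  · rintro ⟨k, rfl⟩
    exact ⟨k.unpair.1, min_le_right _ _⟩
  · rintro ⟨s, hs⟩
    exact ⟨Nat.pair s m, by simp [nonIsolatedCountEnum, hs]⟩

theorem continuous_of_restrEq {X : Type*} [TopologicalSpace X] {f : Struc → X} (s : ℕ)
    (hf : ∀ R R', restrEq R R' s → f R = f R') : Continuous f := by
  let restrict : Struc → Fin (s + 1) → Fin (s + 1) → Bool := fun R x y => R x y
  let extend : (Fin (s + 1) → Fin (s + 1) → Bool) → Struc := fun v x y =>
    if h : x ≤ s ∧ y ≤ s then v ⟨x, by omega⟩ ⟨y, by omega⟩ else false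
  have hf' : f = (f ∘ extend) ∘ restrict :=
    funext fun R => hf _ _ fun x hx y hy => by simp [restrict, extend, hx, hy]
  rw [hf']
  exact continuous_of_discreteTopology.comp (by fun_prop)

theorem continuous_nonIsolatedCountEnum : Continuous nonIsolatedCountEnum :=
  continuous_pi fun k => continuous_of_restrEq k.unpair.1 fun R R' h => by
    simp only [nonIsolatedCountEnum, nonIsolatedUpTo_congr h]

theorem exists_equiv_apply_eq_of_injOn {ι α : Type*} [Countable α] {S : Set ι} {w w' : ι → α}
    (hw : InjOn w S) (hw' : InjOn w' S) (hc : (w '' S)ᶜ.Infinite) (hc' : (w' '' S)ᶜ.Infinite) :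
    ∃ e : α ≃ α, ∀ i ∈ S, e (w i) = w' i := by
  classical
  have := hc.to_subtype
  have := hc'.to_subtype
  obtain ⟨eCompl⟩ : Nonempty (↥(w '' S)ᶜ ≃ ↥(w' '' S)ᶜ) := nonempty_equiv_of_countable
  let eImage := (Equiv.Set.imageOfInjOn w S hw).symm.trans (Equiv.Set.imageOfInjOn w' S hw')
  refine ⟨(Equiv.Set.sumCompl _).symm.trans ((eImage.sumCongr eCompl).trans
    (Equiv.Set.sumCompl _)), fun i hi => ?_⟩
  have hwi : (Equiv.Set.imageOfInjOn w S hw).symm ⟨w i, mem_image_of_mem w hi⟩ = ⟨i, hi⟩ :=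
    (Equiv.symm_apply_eq _).2 rfl
  simp [Equiv.Set.sumCompl_symm_apply_of_mem (mem_image_of_mem w hi), eImage, hwi]
  rfl

def line : Struc := fun x y => decide (x + 1 = y ∨ y + 1 = x)

open Classical in
noncomputable def pushOn (Q : Struc) (S : Set ℕ) (w : ℕ → ℕ) : Struc := fun x y =>
  decide (∃ i ∈ S, ∃ j ∈ S, w i = x ∧ w j = y ∧ Q i j = true)

theorem pushOn_congr (Q : Struc) {S : Set ℕ} {w w' : ℕ → ℕ} (h : EqOn w w' S) :
    pushOn Q S w = pushOn Q S w' := by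
  funext x y
  simp only [pushOn, decide_eq_decide]
  refine exists_congr fun i => and_congr_right fun hi =>
    exists_congr fun j => and_congr_right fun hj => ?_
  rw [h hi, h hj]

theorem isom_pushOn (Q : Struc) {S : Set ℕ} {w w' : ℕ → ℕ} (hw : InjOn w S) (hw' : InjOn w' S)
    (hc : (w '' S)ᶜ.Infinite) (hc' : (w' '' S)ᶜ.Infinite) :
    Isom (pushOn Q S w) (pushOn Q S w') := by
  obtain ⟨e, he⟩ := exists_equiv_apply_eq_of_injOn hw hw' hc hc'
  refine ⟨e, fun x y => ?_⟩
  simp only [pushOn, decide_eq_decide]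
  refine exists_congr fun i => and_congr_right fun hi =>
    exists_congr fun j => and_congr_right fun hj => ?_
  rw [← he i hi, ← he j hj, e.apply_eq_iff_eq, e.apply_eq_iff_eq]

theorem pathGraph_eq_pushOn (n : ℕ) : pathGraph n = pushOn line (Iio n) id := by
  funext x y
  simp only [pathGraph, pushOn, line, decide_eq_decide, mem_Iio, id, decide_eq_true_eq]
  constructor
  · rintro ⟨hxy, hx, hy⟩
    exact ⟨x, hx, y, hy, rfl, rfl, hxy⟩
  · rintro ⟨x, hx, y, hy, rfl, rfl, hxy⟩
    exact ⟨hxy, hx, hy⟩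

theorem rayGraph_eq_pushOn : rayGraph = pushOn line univ (2 * ·) := by
  funext x y
  unfold rayGraph pushOn
  rw [decide_eq_decide]
  simp only [line, mem_univ, true_and, decide_eq_true_eq]
  constructor
  · rintro ⟨hx, hy, hxy⟩
    exact ⟨x / 2, y / 2, by omega, by omega, by omega⟩
  · rintro ⟨i, j, rfl, rfl, hij⟩
    omega

theorem isom_pushOn_line_Iio {w : ℕ → ℕ} {n : ℕ} (hw : InjOn w (Iio n)) :
    Isom (pushOn line (Iio n) w) (pathGraph n) := by
  rw [pathGraph_eq_pushOn]
  exact isom_pushOn line hw (injOn_id _) ((finite_Iio n).image w).infinite_compl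
    ((finite_Iio n).image id).infinite_compl

theorem infinite_compl_range_of_even {w : ℕ → ℕ} (hw : ∀ i, Even (w i)) :
    (range w)ᶜ.Infinite :=
  infinite_of_injective_forall_mem (f := fun i => 2 * i + 1)
    (fun a b (h : 2 * a + 1 = 2 * b + 1) => by omega) fun i ⟨j, hj⟩ => by
      obtain ⟨k, hk⟩ := hw j
      omega

theorem isom_pushOn_line_univ {w : ℕ → ℕ} (hw : Function.Injective w) (hc : (range w)ᶜ.Infinite) :
    Isom (pushOn line univ w) rayGraph := by
  rw [rayGraph_eq_pushOn]
  refine isom_pushOn line hw.injOn (fun a _ b _ h => by omega) ?_ ?_ <;> rw [image_univ]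
  exacts [hc, infinite_compl_range_of_even fun i => even_two_mul i]

theorem restrEq_pushOn_univ_Iio (Q : Struc) {w : ℕ → ℕ} (hw : StrictMono w) {n s : ℕ}
    (hs : s < w n) : restrEq (pushOn Q univ w) (pushOn Q (Iio n) w) s := by
  intro x hx y hy
  simp only [pushOn, decide_eq_decide, mem_univ, true_and, mem_Iio]
  constructor
  · rintro ⟨i, j, rfl, rfl, hij⟩
    exact ⟨i, hw.lt_iff_lt.1 (by omega), j, hw.lt_iff_lt.1 (by omega), rfl, rfl, hij⟩
  · rintro ⟨i, -, j, -, hij⟩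
    exact ⟨i, j, hij⟩

def strongRecFix (F : (ℕ → ℕ) → ℕ → ℕ) : ℕ → ℕ :=
  Nat.strongRec fun n rec => F (fun m => if h : m < n then rec m h else 0) n

theorem strongRecFix_eq {F : (ℕ → ℕ) → ℕ → ℕ}
    (hF : ∀ u u' n, (∀ m < n, u m = u' m) → F u n = F u' n) (n : ℕ) :
    strongRecFix F n = F (strongRecFix F) n := by
  rw [strongRecFix, Nat.strongRec_eq]
  exact hF _ _ n fun m hm => by simp [hm, strongRecFix]

noncomputable def conjectureStage {I : Type} (M : Struc → ℕ → Option I) (P : Struc) (i : I)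
    (b : ℕ) : ℕ :=
  Classical.epsilon fun s => b ≤ s ∧ M P s = some i

theorem conjectureStage_spec {I : Type} {A : I → Struc} {M : Struc → ℕ → Option I}
    (hM : ExLearns A M) {P : Struc} {i : I} (hP : Isom P (A i)) (b : ℕ) :
    b ≤ conjectureStage M P i b ∧ M P (conjectureStage M P i b) = some i := by
  obtain ⟨s₀, hs₀⟩ := hM P i hP
  exact Classical.epsilon_spec (p := fun s => b ≤ s ∧ M P s = some i)
    ⟨max b s₀, le_max_left _ _, hs₀ _ (le_max_right _ _)⟩

-- `+ 2 * stage + 2` keeps all vertices even, so the ray keeps infinitely many isolated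
-- vertices, and puts vertex `n + 1` beyond the stage at which `M` conjectures the path.
noncomputable def diagVertexStep (M : Struc → ℕ → Option ℕ) (u : ℕ → ℕ) : ℕ → ℕ
  | 0 => 0
  | n + 1 => u n + 2 * conjectureStage M (pushOn line (Iio (n + 1)) u) n n + 2

noncomputable def diagVertex (M : Struc → ℕ → Option ℕ) : ℕ → ℕ := strongRecFix (diagVertexStep M)

section diagVertex

variable (M : Struc → ℕ → Option ℕ)

theorem diagVertexStep_congr (u u' : ℕ → ℕ) (n : ℕ) (h : ∀ m < n, u m = u' m) :
    diagVertexStep M u n = diagVertexStep M u' n := by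
  cases n with
  | zero => rfl
  | succ n =>
    rw [diagVertexStep, diagVertexStep, h n n.lt_succ_self,
      pushOn_congr line (S := Iio (n + 1)) fun m hm => h m hm]

theorem diagVertex_zero : diagVertex M 0 = 0 := by
  rw [diagVertex, strongRecFix_eq (diagVertexStep_congr M)]
  rfl

theorem diagVertex_succ (n : ℕ) : diagVertex M (n + 1) =
    diagVertex M n + 2 * conjectureStage M (pushOn line (Iio (n + 1)) (diagVertex M)) n n + 2 := by
  rw [diagVertex, strongRecFix_eq (diagVertexStep_congr M)]
  rfl

theorem strictMono_diagVertex : StrictMono (diagVertex M) :=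
  strictMono_nat_of_lt_succ fun n => by rw [diagVertex_succ]; omega

theorem even_diagVertex (n : ℕ) : Even (diagVertex M n) := by
  induction n with
  | zero => rw [diagVertex_zero]; exact ⟨0, rfl⟩
  | succ n ih => rw [diagVertex_succ]; exact (ih.add (even_two_mul _)).add even_two

end diagVertex

theorem exists_late_path_conj_diagVertex {M : Struc → ℕ → Option ℕ} (hM : IsLearner M)
    (hEx : ExLearns pathFamily M) (n : ℕ) :
    ∃ s ≥ n, M (pushOn line univ (diagVertex M)) s = some (n + 1) := by
  obtain ⟨hs, hconj⟩ := conjectureStage_spec hEx (i := n + 1)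
    (isom_pushOn_line_Iio (n := n + 1 + 1) (strictMono_diagVertex M).injective.injOn) (n + 1)
  refine ⟨_, by omega,
    (hM _ _ _ (restrEq_pushOn_univ_Iio line (strictMono_diagVertex M) ?_)).trans hconj⟩
  rw [diagVertex_succ]
  omega

theorem not_exLearns_pathFamily {M : Struc → ℕ → Option ℕ} (hM : IsLearner M) :
    ¬ ExLearns pathFamily M := by
  intro hEx
  obtain ⟨s₀, hs₀⟩ := hEx _ 0 (isom_pushOn_line_univ (strictMono_diagVertex M).injective
    (infinite_compl_range_of_even (even_diagVertex M)))
  obtain ⟨s, hs, hconj⟩ := exists_late_path_conj_diagVertex hM hEx s₀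
  simpa using (hs₀ s hs).symm.trans hconj

/-- The family `{R_n ⊕ I : n ≥ 2} ∪ {R ⊕ I}` is `E_range`-learnable but not
Ex-learnable. -/
theorem pathFamily_erange_not_ex :
    (∃ Γ : Struc → (ℕ → ℕ), ContinuousOn Γ (LD pathFamily) ∧
        ∀ R ∈ LD pathFamily, ∀ R' ∈ LD pathFamily,
          (Isom R R' ↔ Erange (Γ R) (Γ R'))) ∧
    ¬ ∃ M : Struc → ℕ → Option ℕ, IsLearner M ∧ ExLearns pathFamily M := by
  refine ⟨⟨nonIsolatedCountEnum, continuous_nonIsolatedCountEnum.continuousOn,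
    fun R hR R' hR' => ?_⟩, fun ⟨_, hM, hEx⟩ => not_exLearns_pathFamily hM hEx⟩
  rw [isom_iff_encard_nonIsolated_eq injective_encard_nonIsolated_pathFamily hR hR', Erange,
    range_nonIsolatedCountEnum, range_nonIsolatedCountEnum]
  exact ⟨fun h => by rw [h], fun h => ENat.eq_of_forall_natCast_le_iff fun m => Set.ext_iff.1 h m⟩
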